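/- For coprime positive integers a < b with (a,b) ≠ (1,2), the functions E and Euc are mutually inverse in the following sense: E applied to the string Euc(a,b) equals [a;b], where E(empty) = [1;2], E(TQ) = [a'; a'+b'] and E(VQ) = [b'; a'+b'] for E(Q) = [a';b']. -/

import Mathlib

/-- The three symbols of an RVT code word. -/
inductive RVT : Type
  | R | V | T
deriving DecidableEq, Repr

/-- Replace a leading run of `T`'s by `R`'s. -/
def deT : List RVT → List RVT
  | RVT.T :: xs => RVT.R :: deT xs
  | xs => xs

/-- If the word begins with `V`, replace that `V` and the immediately
following `T`'s by `R`'s. -/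
def reg : List RVT → List RVT
  | RVT.V :: xs => RVT.R :: deT xs
  | xs => xs

/-- The lifted word `L(W)`: remove the first symbol (an `R`), then replace a
leading maximal critical block `V Tᵗ` by `R^(t+1)`. -/
def lift (w : List RVT) : List RVT := reg w.tail

/-- Length of the leading run of `T`'s. -/
def countT : List RVT → ℕ
  | RVT.T :: xs => countT xs + 1
  | _ => 0

/-- Fueled version of the front-end recursion for the Puiseux characteristic
(Theorem PCfront): base case `[1]` on all-`R` words; given
`PC(L(W)) = [l0; l1, ..., lg]`,
(A) if `W` begins `RR` then `PC(W) = [l0; l1+l0, ..., lg+l0]`;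
(B) if `W` begins `R V T^t R` or `W = R V T^t` then
`PC(W) = [(t+2)l0; (t+3)l0, l1+l0, ..., lg+l0]`;
(C) if `W` begins `R V T^t V` then `PC(W) = [l1; l1+l0, ..., lg+l0]`. -/
def PCf : ℕ → List RVT → List ℕ
  | 0, _ => [1]
  | _ + 1, [] => [1]
  | fuel + 1, w@(_ :: rest) =>
    if w.all (· = RVT.R) then [1]
    else
      let p := PCf fuel (lift w)
      let l0 := p.headD 1
      let tl := p.tail
      match rest with
      | RVT.V :: xs =>
        match xs.drop (countT xs) with
        | RVT.V :: _ => tl.headD 1 :: tl.map (· + l0)                                -- case (C)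
        | _ => ((countT xs + 2) * l0) :: ((countT xs + 3) * l0) :: tl.map (· + l0)   -- case (B)
      | _ => l0 :: tl.map (· + l0)                                                   -- case (A)

/-- The Puiseux characteristic `PC(W)` computed by the front-end recursion. -/
def PC (w : List RVT) : List ℕ := PCf w.length w

/-- A valid RVT code word: begins with `R`, and `T` occurs only immediately
after a `V` or a `T`. -/
def ValidRVT (w : List RVT) : Prop :=
  w.head? = some RVT.R ∧
  ∀ i, w[i + 1]? = some RVT.T → (w[i]? = some RVT.V ∨ w[i]? = some RVT.T)

/-- The function `E` on strings, with `E_T[a;b] = [a;a+b]`, `E_V[a;b] = [b;a+b]`,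
`E_R = E_T`, and base value `E(empty) = [1;2]`; the leftmost symbol acts last. -/
def Efun : List RVT → ℕ × ℕ
  | [] => (1, 2)
  | RVT.V :: q => ((Efun q).2, (Efun q).1 + (Efun q).2)
  | _ :: q => ((Efun q).1, (Efun q).1 + (Efun q).2)

/-- The Euclidean-type recursion: `Euc(1,2)` is the empty word; for coprime
`a < b`, if `b < 2a` then `Euc(a,b) = V · Euc(b-a,a)`, and if `b > 2a` then
`Euc(a,b) = T · Euc(a,b-a)`. -/
def Euc (a b : ℕ) : List RVT :=
  if a = 1 ∧ b = 2 then []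
  else if _h1 : 0 < a ∧ a < b ∧ b < 2 * a then RVT.V :: Euc (b - a) a
  else if _h2 : 0 < a ∧ a < b ∧ 2 * a < b then RVT.T :: Euc a (b - a)
  else []
termination_by a + b
decreasing_by all_goals omega

theorem Efun_cons_V (q : List RVT) :
    Efun (RVT.V :: q) = ((Efun q).2, (Efun q).1 + (Efun q).2) := rfl

theorem Efun_cons_T (q : List RVT) :
    Efun (RVT.T :: q) = ((Efun q).1, (Efun q).1 + (Efun q).2) := rfl

theorem Euc_one_two : Euc 1 2 = [] := by
  rw [Euc, if_pos ⟨rfl, rfl⟩]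

theorem Euc_of_lt_two_mul {a b : ℕ} (hab : a < b) (hb : b < 2 * a) :
    Euc a b = RVT.V :: Euc (b - a) a := by
  rw [Euc, if_neg (by omega), dif_pos ⟨by omega, hab, hb⟩]

theorem Euc_of_two_mul_lt {a b : ℕ} (ha : 0 < a) (hb : 2 * a < b) :
    Euc a b = RVT.T :: Euc a (b - a) := by
  rw [Euc, if_neg (by omega), dif_neg (by omega), dif_pos ⟨ha, by omega, hb⟩]

theorem Efun_Euc {a b : ℕ} (ha : 0 < a) (hab : a < b) (hcop : Nat.Coprime a b) :
    Efun (Euc a b) = (a, b) := by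
  rcases lt_trichotomy b (2 * a) with hb | rfl | hb
  · have hcop' : Nat.Coprime (b - a) a := (Nat.coprime_sub_self_left hab.le).2 hcop.symm
    rw [Euc_of_lt_two_mul hab hb, Efun_cons_V, Efun_Euc (by omega) (by omega) hcop',
      Nat.sub_add_cancel hab.le]
  · obtain rfl : a = 1 := hcop.eq_one_of_dvd (Dvd.intro_left 2 rfl)
    rw [Euc_one_two]
    rfl
  · have hcop' : Nat.Coprime a (b - a) := (Nat.coprime_sub_self_right hab.le).2 hcop
    rw [Euc_of_two_mul_lt ha hb, Efun_cons_T, Efun_Euc ha (by omega) hcop',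
      Nat.add_sub_cancel' hab.le]
termination_by a + b

theorem statement11_general (a b : ℕ) (ha : 0 < a) (hab : a < b)
    (hcop : Nat.gcd a b = 1) :
    Efun (Euc a b) = (a, b) :=
  Efun_Euc ha hab hcop

/-- For coprime positive integers `a < b` with `(a,b) ≠ (1,2)`,
`E(Euc(a,b)) = [a; b]`. -/
theorem statement11 (a b : ℕ) (ha : 0 < a) (hab : a < b)
    (hcop : Nat.gcd a b = 1) (hne : ¬(a = 1 ∧ b = 2)) :
    Efun (Euc a b) = (a, b) :=
  statement11_general a b ha hab hcop
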